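/- arXiv:2008.03445 — 2 statements merged into one kernel-verified Lean document; each statement's English description precedes it below -/
import Mathlib

section
/- Let h : ℝ² × ℝ² → ℝ satisfy the triangle inequality, let u : ℝ² → ℝ, and let γ₁, γ₂ : ℝ → ℝ² be curves calibrated by u (i.e. h(γ_i(t₁), γ_i(t₂)) = u(γ_i(t₂)) - u(γ_i(t₁)) for all t₁ ≤ t₂). Define d_u(A,B) = inf_{x∈A, y∈B} (h(x,y) - (u(y)-u(x))). Then d_u(γ₁,γ₂) = lim_{t→+∞, s→-∞} (h(γ₁(s), γ₂(t)) - (u(γ₂(t)) - u(γ₁(s)))). -/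
/-!
Write `G(s, t) = h(γ₁ s, γ₂ t) - (u(γ₂ t) - u(γ₁ s))`. Going around the triangle through `γ₁ s'`
and `γ₂ t'`, and using that both curves are calibrated, shows that `G` is nondecreasing in `s` and
nonincreasing in `t`; it is nonnegative because `h` dominates the increment of `u`. So `G`
converges to its infimum as `s → -∞`, `t → +∞`, and that infimum is `d_u(γ₁, γ₂)`.
-/

open Filter Topology Set

/-- The barrier `d_u(A,B) = inf_{x∈A,y∈B} (h(x,y) - (u(y) - u(x)))`. -/
noncomputable def du (h : EuclideanSpace ℝ (Fin 2) → EuclideanSpace ℝ (Fin 2) → ℝ)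
    (u : EuclideanSpace ℝ (Fin 2) → ℝ)
    (A B : Set (EuclideanSpace ℝ (Fin 2))) : ℝ :=
  sInf ((fun xy : EuclideanSpace ℝ (Fin 2) × EuclideanSpace ℝ (Fin 2) =>
    h xy.1 xy.2 - (u xy.2 - u xy.1)) '' (A ×ˢ B))

theorem tendsto_atBot_prod_atTop_ciInf {α β γ : Type*} [Preorder α] [Preorder β]
    [ConditionallyCompletePartialOrderInf γ] [TopologicalSpace γ] [InfConvergenceClass γ]
    {f : α × β → γ} (hf : ∀ ⦃s s' t t'⦄, s ≤ s' → t' ≤ t → f (s, t) ≤ f (s', t'))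
    (hbdd : BddBelow (range f)) :
    Tendsto f (atBot ×ˢ atTop) (𝓝 (⨅ p, f p)) := by
  have := tendsto_atTop_ciInf (f := fun p : αᵒᵈ × β => f (OrderDual.ofDual p.1, p.2))
    (fun _ _ hpq => hf hpq.1 hpq.2) hbdd
  rwa [← prod_atTop_atTop_eq] at this

section Barrier

variable {X : Type*} (h : X → X → ℝ) (u : X → ℝ)

def IsCalibrated (γ : ℝ → X) : Prop :=
  ∀ t₁ t₂, t₁ ≤ t₂ → h (γ t₁) (γ t₂) = u (γ t₂) - u (γ t₁)

def barrierGap (γ₁ γ₂ : ℝ → X) (st : ℝ × ℝ) : ℝ :=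
  h (γ₁ st.1) (γ₂ st.2) - (u (γ₂ st.2) - u (γ₁ st.1))

variable {h u}

theorem barrierGap_nonneg (hlow : ∀ x y, h x y ≥ u y - u x) (γ₁ γ₂ : ℝ → X) (st : ℝ × ℝ) :
    0 ≤ barrierGap h u γ₁ γ₂ st :=
  sub_nonneg.mpr (hlow _ _)

theorem barrierGap_mono (htri : ∀ x y z, h x z ≤ h x y + h y z) {γ₁ γ₂ : ℝ → X}
    (hγ₁ : IsCalibrated h u γ₁) (hγ₂ : IsCalibrated h u γ₂) {s s' t t' : ℝ}
    (hs : s ≤ s') (ht : t' ≤ t) :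
    barrierGap h u γ₁ γ₂ (s, t) ≤ barrierGap h u γ₁ γ₂ (s', t') := by
  have hpath : h (γ₁ s) (γ₂ t) ≤ h (γ₁ s) (γ₁ s') + h (γ₁ s') (γ₂ t') + h (γ₂ t') (γ₂ t) :=
    calc h (γ₁ s) (γ₂ t) ≤ h (γ₁ s) (γ₂ t') + h (γ₂ t') (γ₂ t) := htri _ _ _
      _ ≤ h (γ₁ s) (γ₁ s') + h (γ₁ s') (γ₂ t') + h (γ₂ t') (γ₂ t) := by
        gcongr
        exact htri _ _ _
  rw [hγ₁ s s' hs, hγ₂ t' t ht] at hpath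
  simp only [barrierGap]
  linarith

theorem tendsto_barrierGap (htri : ∀ x y z, h x z ≤ h x y + h y z)
    (hlow : ∀ x y, h x y ≥ u y - u x) {γ₁ γ₂ : ℝ → X}
    (hγ₁ : IsCalibrated h u γ₁) (hγ₂ : IsCalibrated h u γ₂) :
    Tendsto (barrierGap h u γ₁ γ₂) (atBot ×ˢ atTop) (𝓝 (⨅ st, barrierGap h u γ₁ γ₂ st)) :=
  tendsto_atBot_prod_atTop_ciInf (fun _ _ _ _ => barrierGap_mono htri hγ₁ hγ₂)
    ⟨0, forall_mem_range.mpr (barrierGap_nonneg hlow γ₁ γ₂)⟩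

end Barrier

theorem du_range_eq_iInf_barrierGap (h : EuclideanSpace ℝ (Fin 2) → EuclideanSpace ℝ (Fin 2) → ℝ)
    (u : EuclideanSpace ℝ (Fin 2) → ℝ) (γ₁ γ₂ : ℝ → EuclideanSpace ℝ (Fin 2)) :
    du h u (range γ₁) (range γ₂) = ⨅ st, barrierGap h u γ₁ γ₂ st := by
  rw [du, prod_range_range_eq, ← range_comp]
  rfl

/-- The barrier between two calibrated curves is the limit of
`h(γ₁(s), γ₂(t)) - (u(γ₂(t)) - u(γ₁(s)))` as `s → -∞`, `t → +∞`. -/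
theorem stmt_5 (h : EuclideanSpace ℝ (Fin 2) → EuclideanSpace ℝ (Fin 2) → ℝ)
    (htri : ∀ x y z, h x z ≤ h x y + h y z)
    (u : EuclideanSpace ℝ (Fin 2) → ℝ)
    (hlow : ∀ x y, h x y ≥ u y - u x)
    (γ₁ γ₂ : ℝ → EuclideanSpace ℝ (Fin 2))
    (hcalib₁ : ∀ t₁ t₂, t₁ ≤ t₂ → h (γ₁ t₁) (γ₁ t₂) = u (γ₁ t₂) - u (γ₁ t₁))
    (hcalib₂ : ∀ t₁ t₂, t₁ ≤ t₂ → h (γ₂ t₁) (γ₂ t₂) = u (γ₂ t₂) - u (γ₂ t₁)) :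
    Tendsto (fun st : ℝ × ℝ => h (γ₁ st.1) (γ₂ st.2) - (u (γ₂ st.2) - u (γ₁ st.1)))
      (atBot ×ˢ atTop) (nhds (du h u (Set.range γ₁) (Set.range γ₂))) := by
  rw [du_range_eq_iInf_barrierGap]
  exact tendsto_barrierGap htri hlow hcalib₁ hcalib₂
end

section
/- Let F : ℝ² → ℝ be convex and suppose F is not affine on any line segment contained in any open subset of a ball B ⊆ ℝ² (i.e. F is strictly convex on B). Then the set W = ⋃_{p ∈ B} ∂F(p) has nonempty interior in ℝ². -/
/-!
Take a subgradient `q₀` of `F` at the centre `z`. By strict convexity, `F` exceeds the supporting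
affine function `F z + ⟪q₀, · - z⟫` by some `δ > 0` on the sphere of radius `r = R / 2`, and
this gap survives tilting the slope to any `q` with `‖q - q₀‖ < δ / r`. For such `q`, the convex
function `F - ⟪q, ·⟫` attains its minimum over the closed ball at an interior point; that local
minimum is global, so `q` is a subgradient of `F` at a point of the ball.
-/

open Set Metric
open scoped InnerProductSpace

theorem ConvexOn.exists_continuousLinearMap_add_le {E : Type*} [NormedAddCommGroup E]
    [NormedSpace ℝ E] {F : E → ℝ} (hF : ConvexOn ℝ univ F) (hcont : Continuous F) (z : E) :
    ∃ g : E →L[ℝ] ℝ, ∀ p, F z + g (p - z) ≤ F p := by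
  have hopen : IsOpen {x : E × ℝ | x.1 ∈ univ ∧ F x.1 < x.2} := by
    simpa only [mem_univ, true_and] using
      isOpen_lt (f := fun x : E × ℝ => F x.1) (by fun_prop) continuous_snd
  obtain ⟨φ, hφ⟩ := geometric_hahn_banach_open_point hF.convex_strict_epigraph hopen
    (x := (z, F z)) (by simp)
  set c := φ (0, 1)
  have hφ_apply (p : E) (t : ℝ) : φ (p, t) = φ (p, 0) + t * c := by
    rw [← smul_eq_mul, ← map_smul, ← map_add, Prod.smul_mk, Prod.mk_add_mk]
    simp
  have hc : 0 < -c := by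
    have hup := hφ (z, F z + 1) (by simp)
    rw [hφ_apply, hφ_apply z (F z)] at hup
    linarith
  refine ⟨(-c)⁻¹ • φ.comp (ContinuousLinearMap.inl ℝ E ℝ), fun p => ?_⟩
  simp only [_root_.smul_apply, ContinuousLinearMap.comp_apply,
    ContinuousLinearMap.inl_apply, map_sub, smul_eq_mul, ← div_eq_inv_mul, ← sub_div]
  refine le_of_forall_gt_imp_ge_of_dense fun t ht => ?_
  have hsep := hφ (p, t) ⟨mem_univ p, ht⟩
  rw [hφ_apply, hφ_apply z] at hsep
  have hslope : (φ (p, 0) - φ (z, 0)) / -c ≤ t - F z := by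
    rw [div_le_iff₀ hc]
    nlinarith
  linarith

section InnerProductSpace

variable {E : Type*} [NormedAddCommGroup E] [InnerProductSpace ℝ E] {F : E → ℝ}

def subdifferential (F : E → ℝ) (p : E) : Set E :=
  {q | ∀ p', F p + ⟪q, p' - p⟫_ℝ ≤ F p'}

theorem mem_subdifferential_iff {p q : E} :
    q ∈ subdifferential F p ↔ ∀ x, F p - ⟪q, p⟫_ℝ ≤ F x - ⟪q, x⟫_ℝ := by
  refine forall_congr' fun x => ?_
  rw [inner_sub_right]
  constructor <;> intro h <;> linarith

theorem ConvexOn.exists_mem_subdifferential [CompleteSpace E] (hF : ConvexOn ℝ univ F)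
    (hcont : Continuous F) (z : E) : ∃ q, q ∈ subdifferential F z := by
  obtain ⟨g, hg⟩ := hF.exists_continuousLinearMap_add_le hcont z
  exact ⟨(InnerProductSpace.toDual ℝ E).symm g, fun p => by
    simpa only [InnerProductSpace.toDual_symm_apply] using hg p⟩

theorem StrictConvexOn.add_inner_lt_of_mem_subdifferential {s : Set E}
    (hF : StrictConvexOn ℝ s F) {z p q : E} (hz : z ∈ s) (hp : p ∈ s) (hne : z ≠ p)
    (hq : q ∈ subdifferential F z) : F z + ⟪q, p - z⟫_ℝ < F p := by
  have hmid := hF.2 hz hp hne (by norm_num : (0 : ℝ) < 1 / 2)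
    (by norm_num : (0 : ℝ) < 1 / 2) (by norm_num)
  have hsupp := hq ((1 / 2 : ℝ) • z + (1 / 2 : ℝ) • p)
  rw [show (1 / 2 : ℝ) • z + (1 / 2 : ℝ) • p - z = (1 / 2 : ℝ) • (p - z) by module,
    real_inner_smul_right] at hsupp
  simp only [smul_eq_mul] at hmid
  linarith

theorem exists_mem_ball_mem_subdifferential [ProperSpace E] (hF : ConvexOn ℝ univ F)
    (hcont : Continuous F) {z q : E} {r : ℝ} (hr : 0 ≤ r)
    (hsphere : ∀ p ∈ sphere z r, F z + ⟪q, p - z⟫_ℝ < F p) :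
    ∃ p ∈ ball z r, q ∈ subdifferential F p := by
  set G : E → ℝ := fun x => F x - ⟪q, x⟫_ℝ
  obtain ⟨p, hp, hmin⟩ := (isCompact_closedBall z r).exists_isMinOn (nonempty_closedBall.2 hr)
    (f := G) (by fun_prop)
  have hp_ball : p ∈ ball z r := by
    refine (mem_closedBall.1 hp).lt_of_ne fun hpr => ?_
    have hlt := hsphere p hpr
    have hle : G p ≤ G z := hmin (mem_closedBall_self hr)
    simp only [G, inner_sub_right] at hlt hle
    linarith
  have hG : ConvexOn ℝ univ G := hF.sub ((innerₛₗ ℝ q).concaveOn convex_univ)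
  have hloc : IsLocalMin G p := hmin.isLocalMin (closedBall_mem_nhds_of_mem hp_ball)
  exact ⟨p, hp_ball, mem_subdifferential_iff.2 (IsMinOn.of_isLocalMin_of_convex_univ hloc hG)⟩

theorem ball_subset_biUnion_subdifferential [ProperSpace E] (hF : ConvexOn ℝ univ F)
    (hcont : Continuous F) {z q₀ : E} {r δ : ℝ} (hr : 0 < r)
    (hgap : ∀ p ∈ sphere z r, F z + ⟪q₀, p - z⟫_ℝ + δ ≤ F p) :
    ball q₀ (δ / r) ⊆ ⋃ p ∈ ball z r, subdifferential F p := by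
  intro q hq
  rw [mem_ball, dist_eq_norm, lt_div_iff₀ hr] at hq
  obtain ⟨p, hp, hqp⟩ := exists_mem_ball_mem_subdifferential (z := z) (q := q) hF hcont hr.le
    fun p hp => by
      have htilt : ⟪q - q₀, p - z⟫_ℝ ≤ ‖q - q₀‖ * r :=
        (real_inner_le_norm _ _).trans_eq (by rw [← dist_eq_norm p, mem_sphere.1 hp])
      rw [inner_sub_left] at htilt
      linarith [hgap p hp]
  exact mem_biUnion hp hqp

end InnerProductSpace

/-- If a convex function is strictly convex on an open ball in ℝ², then the
union of its subdifferentials over the ball has nonempty interior. -/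
theorem stmt_14 (F : EuclideanSpace ℝ (Fin 2) → ℝ)
    (hconv : ConvexOn ℝ Set.univ F)
    (z : EuclideanSpace ℝ (Fin 2)) (R : ℝ) (hR : 0 < R)
    (hstrict : StrictConvexOn ℝ (Metric.ball z R) F) :
    (interior (⋃ p ∈ Metric.ball z R,
      {q : EuclideanSpace ℝ (Fin 2) |
        ∀ p', F p' ≥ F p + (inner ℝ q (p' - p) : ℝ)})).Nonempty := by
  have hcont : Continuous F := continuousOn_univ.1 (hconv.continuousOn isOpen_univ)
  obtain ⟨q₀, hq₀⟩ := hconv.exists_mem_subdifferential hcont z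
  have hr : 0 < R / 2 := half_pos hR
  have hsphere : sphere z (R / 2) ⊆ ball z R := sphere_subset_ball (half_lt_self hR)
  obtain ⟨a, ha, hbound⟩ := (isCompact_sphere z (R / 2)).exists_forall_le'
    (f := fun p => F p - ⟪q₀, p - z⟫_ℝ) (by fun_prop) (a := F z) fun p hp => by
      have hgap := hstrict.add_inner_lt_of_mem_subdifferential (mem_ball_self hR) (hsphere hp)
        (ne_of_mem_sphere hp hr.ne').symm hq₀
      linarith
  have hW := ball_subset_biUnion_subdifferential hconv hcont (δ := a - F z) hr
    fun p hp => by linarith [hbound p hp]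
  exact ⟨q₀, interior_maximal (hW.trans (biUnion_subset_biUnion_left (ball_subset_ball
    (half_le_self hR.le)))) isOpen_ball (mem_ball_self (div_pos (sub_pos.2 ha) hr))⟩
end
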